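/- Let p = 1 − (1 − 1/200)^{50} (the probability that a 50-token sentence contains a trigger word when each token is a trigger with probability 0.005), and let X be a Binomial(10, p) random variable. Then for every real a with 3/10 < a < 1, the probability P(X/10 > a) = Σ_{k : k > 10a} C(10, k)·p^k·(1−p)^{10−k} is strictly less than p. Since for a Bernoulli(p) variable Q_S one has P(Q_S > a) = p for such a, this says P(Q_S > a) > P(Q_P > a) where Q_P = X/10. -/
import Mathlib


theorem paraphrase_averaging_dilutes_watermark_P10 (p : ℝ)
    (hp : p = 1 - (1 - 1 / 200 : ℝ) ^ 50) (a : ℝ) (ha1 : 3 / 10 < a) (ha2 : a < 1) :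
    ∑ k ∈ (Finset.range 11).filter (fun k : ℕ => (10 : ℝ) * a < (k : ℝ)),
        (Nat.choose 10 k : ℝ) * p ^ k * (1 - p) ^ (10 - k) < p := by
  have hpl : (0.22 : ℝ) < p := by rw [hp]; norm_num
  have hpu : p < 0.23 := by rw [hp]; norm_num
  have hp0 : (0:ℝ) ≤ p := by linarith
  have hq0 : (0:ℝ) ≤ 1 - p := by linarith
  have hqu : 1 - p ≤ 0.78 := by linarith
  have hpu' : p ≤ 0.23 := le_of_lt hpu
  have hsub : ∑ k ∈ (Finset.range 11).filter (fun k : ℕ => (10 : ℝ) * a < (k : ℝ)),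
        (Nat.choose 10 k : ℝ) * p ^ k * (1 - p) ^ (10 - k)
      ≤ ∑ k ∈ (Finset.range 11).filter (fun k : ℕ => 4 ≤ k),
        (Nat.choose 10 k : ℝ) * p ^ k * (1 - p) ^ (10 - k) := by
    apply Finset.sum_le_sum_of_subset_of_nonneg
    · intro k hk
      simp only [Finset.mem_filter] at *
      refine ⟨hk.1, ?_⟩
      have h3 : (3:ℝ) < (k:ℝ) := by linarith [hk.2]
      have : (3:ℕ) < k := by exact_mod_cast h3
      omega
    · intro k _ _
      positivity
  refine lt_of_le_of_lt hsub ?_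
  have hset : (Finset.range 11).filter (fun k : ℕ => 4 ≤ k)
      = ({4,5,6,7,8,9,10} : Finset ℕ) := by decide
  rw [hset]
  norm_num [Finset.sum_insert, Finset.mem_insert, Nat.choose]
  calc (210:ℝ) * p ^ 4 * (1 - p) ^ 6 +
      (252 * p ^ 5 * (1 - p) ^ 5 +
        (210 * p ^ 6 * (1 - p) ^ 4 +
          (120 * p ^ 7 * (1 - p) ^ 3 +
            (45 * p ^ 8 * (1 - p) ^ 2 + (10 * p ^ 9 * (1 - p) + p ^ 10)))))
      ≤ (210:ℝ) * 0.23 ^ 4 * 0.78 ^ 6 +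
      (252 * 0.23 ^ 5 * 0.78 ^ 5 +
        (210 * 0.23 ^ 6 * 0.78 ^ 4 +
          (120 * 0.23 ^ 7 * 0.78 ^ 3 +
            (45 * 0.23 ^ 8 * 0.78 ^ 2 + (10 * 0.23 ^ 9 * 0.78 + 0.23 ^ 10))))) := by gcongr
    _ < p := by norm_num; linarith
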